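/- Shatrovskii's theorem: Let h ≥ 2, let r₁ < ⋯ < r_h be pairwise relatively prime positive integers, and let P be a positive integer with P ≥ r_h − r₁ such that every prime dividing any difference r_j − r_i divides P. Define s_{i,k} = kP + r_i, S_k = ∏_i s_{i,k}, a_{i,k} = S_k/s_{i,k}, k₀ = ⌊1/(2^{1/h}−1)⌋+1, fix k₁ ≥ k₀, and let ℓ_t be the unique nonnegative integer with S_{k₁+ℓ_t} ≤ S_{k₁}^t < S_{k₁+ℓ_t+1}. Set V(t) = { a_{i,k₁+ℓ_t} v : 1 ≤ i ≤ h, 1 ≤ v ≤ (h−1)S_{k₁+ℓ_{t+1}}/a_{i,k₁+ℓ_t} } and A = [0, (h−1)S_{k₁}] ∪ ∪_{t≥1} V(t). Then A is a basis of order h: every nonnegative integer is a sum of exactly h elements of A. -/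

import Mathlib

/-!
The moduli `s_{i,k} = kP + r_i` are pairwise coprime: a common prime factor of two of them divides
`r_j - r_i`, hence `P`, hence both `r_i` and `r_j`. So the Chinese remainder theorem writes every
`n > (h - 1) S_k` as `∑ a_{i,k} x_i` with `1 ≤ x_i ≤ s_{i,k}`, up to a nonnegative multiple of `S_k`
that is absorbed into one `x_i`. Since `S_{k₁}^t < S_{k₁+ℓ_t+1}`, the `ℓ_t` are unbounded, so every
`n > (h - 1) S_{k₁}` satisfies `(h - 1) S_{k₁+ℓ_t} < n ≤ (h - 1) S_{k₁+ℓ_{t+1}}` for some `t ≥ 1`;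
the summands `a_{i,k₁+ℓ_t} x_i` are at most `n` and therefore lie in `V(t)`.
-/

open Finset Function

namespace Nat

theorem exists_mul_modEq_of_coprime {a n : ℕ} (hn : 0 < n) (ha : a.Coprime n) (m : ℕ) :
    ∃ x, 1 ≤ x ∧ x ≤ n ∧ a * x ≡ m [MOD n] := by
  have := NeZero.of_pos hn
  set u := ZMod.unitOfCoprime a ha
  refine ⟨((u⁻¹ * m : ZMod n) - 1).val + 1, le_add_self, ZMod.val_lt _, ?_⟩
  rw [← ZMod.natCast_eq_natCast_iff]
  push_cast [ZMod.natCast_val, ZMod.cast_id', id]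
  rw [← ZMod.coe_unitOfCoprime a ha, sub_add_cancel, ← mul_assoc, Units.mul_inv, one_mul]

theorem ModEq.prod_of_pairwise_coprime {ι : Type*} [Fintype ι] {σ : ι → ℕ}
    (hσ : Pairwise (Coprime on σ)) {a b : ℕ} (h : ∀ i, a ≡ b [MOD σ i]) :
    a ≡ b [MOD ∏ i, σ i] := by
  simp only [modEq_iff_dvd] at h ⊢
  push_cast
  exact Fintype.prod_dvd_of_coprime (fun i j hij => isCoprime_iff_coprime.mpr (hσ hij)) h

theorem coprime_mul_add_mul_add {a b : ℕ} (hab : a.Coprime b) {P : ℕ}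
    (hP : ∀ p, p.Prime → p ∣ b - a → p ∣ P) (k : ℕ) : (k * P + a).Coprime (k * P + b) := by
  refine coprime_of_dvd fun p hp hpa hpb => hp.one_lt.ne' ?_
  have hpba : p ∣ b - a := by simpa [Nat.add_sub_add_left] using Nat.dvd_sub hpb hpa
  have hpP : p ∣ k * P := (hP p hp hpba).mul_left k
  exact eq_one_of_dvd_coprimes hab ((Nat.dvd_add_right hpP).1 hpa) ((Nat.dvd_add_right hpP).1 hpb)

theorem prod_div_pos {ι : Type*} [Fintype ι] {σ : ι → ℕ} (hσ : ∀ i, 0 < σ i) (i : ι) :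
    0 < (∏ j, σ j) / σ i :=
  Nat.div_pos (Nat.le_of_dvd (prod_pos fun j _ => hσ j) (dvd_prod_of_mem _ (mem_univ i))) (hσ i)

theorem le_div_of_sum_mul_le {ι : Type*} [Fintype ι] {b x : ι → ℕ} (hb : ∀ i, 0 < b i) {X : ℕ}
    (hX : ∑ i, b i * x i ≤ X) (i : ι) : x i ≤ X / b i := by
  rw [Nat.le_div_iff_mul_le (hb i), mul_comm]
  exact (single_le_sum (f := fun i => b i * x i) (fun _ _ => Nat.zero_le _) (mem_univ i)).trans hX

theorem exists_pos_sum_prod_div_mul_eq {ι : Type*} [Fintype ι] [Nonempty ι] {σ : ι → ℕ}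
    (hσ : ∀ i, 0 < σ i) (hcop : Pairwise (Coprime on σ)) {m : ℕ}
    (hm : (Fintype.card ι - 1) * ∏ i, σ i < m) :
    ∃ x : ι → ℕ, (∀ i, 1 ≤ x i) ∧ ∑ i, (∏ j, σ j) / σ i * x i = m := by
  classical
  set S := ∏ j, σ j
  have hA : ∀ i, S / σ i = ∏ j ∈ univ.erase i, σ j := fun i =>
    Nat.div_eq_of_eq_mul_left (hσ i) (prod_erase_mul _ _ (mem_univ i)).symm
  have hdvd : ∀ i j, i ≠ j → σ i ∣ S / σ j := fun i j hij =>
    (hA j) ▸ dvd_prod_of_mem _ (mem_erase.2 ⟨hij, mem_univ i⟩)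
  choose x hx1 hxσ hxm using fun i => exists_mul_modEq_of_coprime (hσ i)
    ((hA i) ▸ Coprime.prod_left fun j hj => hcop (ne_of_mem_erase hj)) m
  have hmod : ∑ i, S / σ i * x i ≡ m [MOD S] := ModEq.prod_of_pairwise_coprime hcop fun i => by
    rw [← add_sum_erase _ _ (mem_univ i)]
    calc _ ≡ S / σ i * x i + 0 [MOD σ i] :=
          ModEq.add_left _ ((modEq_zero_iff_dvd).2 (dvd_sum fun j hj =>
            dvd_mul_of_dvd_left (hdvd i j (ne_of_mem_erase hj).symm) _))
      _ ≡ m [MOD σ i] := hxm i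
  have hle : ∑ i, S / σ i * x i ≤ m := by
    refine hmod.le_of_lt_add (lt_of_le_of_lt ?_ (Nat.add_lt_add_right hm S))
    calc ∑ i, S / σ i * x i ≤ ∑ _i : ι, S := sum_le_sum fun i _ =>
          (Nat.mul_le_mul_left _ (hxσ i)).trans
            (Nat.div_mul_cancel (dvd_prod_of_mem _ (mem_univ i))).le
      _ = (Fintype.card ι - 1) * S + S := by
          have := Fintype.card_pos (α := ι)
          rw [sum_const, Finset.card_univ, smul_eq_mul, ← add_one_mul, Nat.sub_add_cancel this]
  obtain ⟨c, hc⟩ := (modEq_iff_dvd' hle).1 hmod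
  obtain ⟨i₀⟩ := ‹Nonempty ι›
  refine ⟨x + Pi.single i₀ (c * σ i₀), fun i => (hx1 i).trans (Nat.le_add_right _ _), ?_⟩
  simp only [Pi.add_apply, Pi.single_apply, mul_add, mul_ite, mul_zero, sum_add_distrib,
    sum_ite_eq', mem_univ, ↓reduceIte]
  rw [mul_left_comm, Nat.div_mul_cancel (dvd_prod_of_mem _ (mem_univ i₀)), mul_comm, ← hc]
  omega

end Nat

theorem pairwise_coprime_mul_add {ι : Type*} [LinearOrder ι] {r : ι → ℕ}
    (hr : Pairwise (Nat.Coprime on r)) {P : ℕ}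
    (hP : ∀ i j, i < j → ∀ p : ℕ, p.Prime → p ∣ r j - r i → p ∣ P) (k : ℕ) :
    Pairwise (Nat.Coprime on fun i => k * P + r i) := by
  intro i j hij
  rcases hij.lt_or_gt with hlt | hgt
  · exact Nat.coprime_mul_add_mul_add (hr hlt.ne) (hP i j hlt) k
  · exact (Nat.coprime_mul_add_mul_add (hr hgt.ne) (hP j i hgt) k).symm

theorem strictMono_prod_mul_add {ι : Type*} [Fintype ι] [Nonempty ι] {r : ι → ℕ}
    (hr : ∀ i, 0 < r i) {P : ℕ} (hP : 0 < P) : StrictMono fun k => ∏ i, (k * P + r i) :=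
  strictMono_nat_of_lt_succ fun k => prod_lt_prod_of_nonempty
    (fun i _ => by have := hr i; positivity) (fun i _ => by rw [add_one_mul]; omega) univ_nonempty

theorem exists_le_of_pow_lt {S : ℕ → ℕ} (hS : StrictMono S) {k : ℕ} (hk : 2 ≤ S k)
    {ℓ : ℕ → ℕ} (hℓ : ∀ t, 1 ≤ t → S k ^ t < S (k + ℓ t + 1)) (N : ℕ) :
    ∃ t, 1 ≤ t ∧ N ≤ ℓ t := by
  by_contra! hN
  have hT : 1 ≤ S (k + N) := by
    have := hS.monotone (Nat.le_add_right k N)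
    omega
  have := calc S (k + N) < 2 ^ S (k + N) := Nat.lt_two_pow_self
    _ ≤ S k ^ S (k + N) := Nat.pow_le_pow_left hk _
    _ < S (k + ℓ (S (k + N)) + 1) := hℓ _ hT
    _ ≤ S (k + N) := hS.monotone (by have := hN _ hT; omega)
  exact lt_irrefl _ this

theorem exists_lt_le_succ (g : ℕ → ℕ) {n t₀ : ℕ} (h₀ : g t₀ < n) (h₁ : ∃ t, t₀ ≤ t ∧ n ≤ g t) :
    ∃ t, t₀ ≤ t ∧ g t < n ∧ n ≤ g (t + 1) := by
  by_contra! hstep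
  obtain ⟨t, ht, hn⟩ := h₁
  have hlt : ∀ t, t₀ ≤ t → g t < n := fun t ht =>
    Nat.le_induction (P := fun t _ => g t < n) h₀ (fun t ht ih => hstep t ht ih) t ht
  exact (hlt t ht).not_ge hn

theorem exists_between_levels {S : ℕ → ℕ} (hS : StrictMono S) {k : ℕ} (hk : 2 ≤ S k)
    {ℓ : ℕ → ℕ} (hℓ : ∀ t, 1 ≤ t → S (k + ℓ t) ≤ S k ^ t ∧ S k ^ t < S (k + ℓ t + 1))
    {c n : ℕ} (hc : 0 < c) (hn : c * S k < n) :
    ∃ t, 1 ≤ t ∧ c * S (k + ℓ t) < n ∧ n ≤ c * S (k + ℓ (t + 1)) := by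
  have hℓ₁ : ℓ 1 = 0 := by
    have := hS.le_iff_le.1 (pow_one (S k) ▸ (hℓ 1 le_rfl).1)
    omega
  refine exists_lt_le_succ (fun t => c * S (k + ℓ t)) (by simpa [hℓ₁]) ?_
  obtain ⟨t, ht, hnt⟩ := exists_le_of_pow_lt hS hk (fun t ht => (hℓ t ht).2) n
  exact ⟨t, ht, hnt.trans ((Nat.le_add_left _ _).trans
    ((hS.id_le _).trans (Nat.le_mul_of_pos_left _ hc)))⟩

theorem stmt17 (h : ℕ) (hh : 2 ≤ h) (r : Fin h → ℕ)
    (hrpos : ∀ i, 0 < r i) (hrmono : StrictMono r)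
    (hrcop : ∀ i j, i ≠ j → Nat.Coprime (r i) (r j))
    (P : ℕ) (hP : 0 < P)
    (hPprime : ∀ i j : Fin h, i < j → ∀ p : ℕ, p.Prime → p ∣ r j - r i → p ∣ P)
    (s : Fin h → ℕ → ℕ) (hs : ∀ i k, s i k = k * P + r i)
    (S : ℕ → ℕ) (hS : ∀ k, S k = ∏ i, s i k)
    (a : Fin h → ℕ → ℕ) (ha : ∀ i k, a i k = S k / s i k)
    (k₁ : ℕ)
    (ℓ : ℕ → ℕ)
    (hℓ : ∀ t : ℕ, 1 ≤ t →
      S (k₁ + ℓ t) ≤ (S k₁) ^ t ∧ (S k₁) ^ t < S (k₁ + ℓ t + 1))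
    (V : ℕ → Set ℕ)
    (hV : ∀ t : ℕ, V t = {m : ℕ | ∃ i : Fin h, ∃ v : ℕ, 1 ≤ v ∧
      v ≤ (h - 1) * S (k₁ + ℓ (t + 1)) / a i (k₁ + ℓ t) ∧ m = a i (k₁ + ℓ t) * v})
    (A : Set ℕ)
    (hA : A = {n : ℕ | n ≤ (h - 1) * S k₁} ∪ ⋃ t ∈ {t : ℕ | 1 ≤ t}, V t) :
    ∀ n : ℕ, ∃ f : Fin h → ℕ, (∀ j, f j ∈ A) ∧ ∑ j, f j = n := by
  have : NeZero h := ⟨by omega⟩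
  have hs₀ : ∀ i k, 0 < s i k := fun i k => hs i k ▸ Nat.add_pos_right _ (hrpos i)
  have hSmono : StrictMono S := by
    convert strictMono_prod_mul_add hrpos hP using 2 with k
    simp only [hS, hs]
  have hSk₁ : 2 ≤ S k₁ := by
    have h01 : r ⟨0, by omega⟩ < r ⟨1, hh⟩ := hrmono (Fin.mk_lt_mk.2 one_pos)
    have := hrpos ⟨0, by omega⟩
    calc 2 ≤ s ⟨1, hh⟩ k₁ := by rw [hs]; omega
      _ ≤ S k₁ := hS k₁ ▸
          Nat.le_of_dvd (prod_pos fun i _ => hs₀ i k₁) (dvd_prod_of_mem _ (mem_univ _))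
  intro n
  rcases le_or_gt n ((h - 1) * S k₁) with hsmall | hlarge
  · refine ⟨Pi.single 0 n, fun j => hA ▸ Or.inl ?_, by simp⟩
    by_cases hj : j = 0 <;> simp [hj, hsmall]
  obtain ⟨t, ht, hlo, hhi⟩ := exists_between_levels hSmono hSk₁ hℓ (by omega) hlarge
  have hcop : Pairwise (Nat.Coprime on fun i => s i (k₁ + ℓ t)) := by
    simpa only [hs] using pairwise_coprime_mul_add hrcop hPprime (k₁ + ℓ t)
  obtain ⟨x, hx1, hx⟩ := Nat.exists_pos_sum_prod_div_mul_eq (hs₀ · (k₁ + ℓ t)) hcop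
    (by simpa only [Fintype.card_fin, ← hS] using hlo)
  simp only [← hS, ← ha] at hx
  have hapos : ∀ i, 0 < a i (k₁ + ℓ t) := fun i => ha i _ ▸ hS _ ▸ Nat.prod_div_pos (hs₀ · _) i
  exact ⟨fun j => a j (k₁ + ℓ t) * x j, fun j => hA ▸ Or.inr (Set.mem_biUnion ht (hV t ▸
    ⟨j, x j, hx1 j, Nat.le_div_of_sum_mul_le hapos (hx.trans_le hhi) j, rfl⟩)), hx⟩
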